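/- arXiv:2504.08318 — 3 statements merged into one kernel-verified Lean document; each statement's English description precedes it below -/
import Mathlib

section
/- Let $\Omega'=(0,1)\times(0,l)$, let $q:(0,1)\times(0,l)\to\mathbb{R}$ be measurable, bounded and positive, set $q^\varepsilon(y,s)=q(\varepsilon^{-1}y,s)$ for $(y,s)\in(0,\varepsilon)\times(0,l)$, and set $\kappa(s)=\int_0^1 q(t,s)\,dt$. Then there exists a constant $C>0$, independent of $\varepsilon$, such that for all $\phi\in H^1(\Omega')$, $\left| \varepsilon^{-1} \int_0^\varepsilon \int_0^l q^\varepsilon(y,s)|\phi(y,s)|^2\,ds\,dy - \int_0^l \kappa(s)|\phi(0,s)|^2\,ds \right| \le C\,\varepsilon^{1/2}\,\|\phi\|^2_{H^1(\Omega')}$. -/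
/-!
Rescaling `y = ε t` and swapping the integrals turns the trace term into the average over the
strip `(0,ε) × (0,l)` of `q(y/ε, s) φ(0,s)²`, so it suffices to bound `|φ(y,s)² - φ(0,s)²|`
uniformly for `0 ≤ y ≤ ε`. By the fundamental theorem of calculus in the first variable and
weighted AM-GM this is at most `ε^{-1/2} ∫₀^ε φ(·,s)² + ε^{1/2} ∫₀¹ |∂₁φ(·,s)|²`, and the
one-dimensional Sobolev bound `sup_{[0,1]} φ(·,s)² ≤ 2 ∫₀¹ φ(·,s)² + ∫₀¹ |∂₁φ(·,s)|²` makes the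
first term `O(ε^{1/2})` too. Integrating in `s` gives the estimate with `C = 2Q`.
-/

open MeasureTheory Set
open scoped Interval

section OneVariable

variable {f f' : ℝ → ℝ} (hf : ∀ x, HasDerivAt f (f' x) x) (hf' : Continuous f')
include hf hf'

theorem abs_sq_sub_sq_le_integral_uIoc (a b : ℝ) :
    |f b ^ 2 - f a ^ 2| ≤ ∫ x in Ι a b, |2 * f x * f' x| := by
  have hfc : Continuous f := continuous_iff_continuousAt.2 fun x => (hf x).continuousAt
  have hftc : ∫ x in a..b, 2 * f x * f' x = f b ^ 2 - f a ^ 2 :=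
    intervalIntegral.integral_eq_sub_of_hasDerivAt
      (fun x _ => ((hf x).fun_pow 2).congr_deriv (by norm_num))
      (((continuous_const.mul hfc).mul hf').intervalIntegrable a b)
  rw [← hftc]
  exact intervalIntegral.norm_integral_le_integral_norm_uIoc (f := fun x => 2 * f x * f' x)

theorem integral_abs_two_mul_le {r : ℝ} (hr : 0 < r) (a b : ℝ) :
    ∫ x in Ioc a b, |2 * f x * f' x|
      ≤ r * (∫ x in Ioc a b, f' x ^ 2) + r⁻¹ * ∫ x in Ioc a b, f x ^ 2 := by
  have hfc : Continuous f := continuous_iff_continuousAt.2 fun x => (hf x).continuousAt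
  have hf2 : IntegrableOn (fun x => r⁻¹ * f x ^ 2) (Ioc a b) :=
    (continuous_const.mul (hfc.pow 2)).integrableOn_Ioc
  have hf'2 : IntegrableOn (fun x => r * f' x ^ 2) (Ioc a b) :=
    (continuous_const.mul (hf'.pow 2)).integrableOn_Ioc
  rw [← integral_const_mul, ← integral_const_mul, ← integral_add hf'2 hf2]
  refine setIntegral_mono_on ((continuous_const.mul hfc).mul hf').abs.integrableOn_Ioc
    (hf'2.add hf2) measurableSet_Ioc fun x _ => ?_
  calc |2 * f x * f' x| = 2 * |f' x| * |f x| := by rw [abs_mul, abs_mul, abs_two]; ring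
    _ ≤ r * |f' x| ^ 2 + r⁻¹ * |f x| ^ 2 := two_mul_le_add_mul_sq hr
    _ = r * f' x ^ 2 + r⁻¹ * f x ^ 2 := by rw [sq_abs, sq_abs]

theorem sq_le_of_mem_Icc_zero_one {t : ℝ} (ht : t ∈ Icc (0 : ℝ) 1) :
    f t ^ 2 ≤ 2 * (∫ u in Ioc (0 : ℝ) 1, f u ^ 2) + ∫ u in Ioc (0 : ℝ) 1, f' u ^ 2 := by
  have hfc : Continuous f := continuous_iff_continuousAt.2 fun x => (hf x).continuousAt
  set K := (∫ u in Ioc (0 : ℝ) 1, f' u ^ 2) + ∫ u in Ioc (0 : ℝ) 1, f u ^ 2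
  have hK : ∫ x in Ioc (0 : ℝ) 1, |2 * f x * f' x| ≤ K := by
    simpa [K] using integral_abs_two_mul_le hf hf' one_pos 0 1
  have hpt : ∀ u ∈ Ioc (0 : ℝ) 1, f t ^ 2 ≤ f u ^ 2 + K := by
    intro u hu
    have hsub : Ι u t ⊆ Ioc 0 1 := Ioc_subset_Ioc (le_min hu.1.le ht.1) (max_le hu.2 ht.2)
    have := (le_abs_self _).trans <| (abs_sq_sub_sq_le_integral_uIoc hf hf' u t).trans <|
      (setIntegral_mono_set ((continuous_const.mul hfc).mul hf').abs.integrableOn_Ioc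
        (ae_of_all _ fun _ => abs_nonneg _) hsub.eventuallyLE).trans hK
    linarith
  have hf2 : IntegrableOn (fun u => f u ^ 2) (Ioc (0 : ℝ) 1) := (hfc.pow 2).integrableOn_Ioc
  have hint := setIntegral_mono_on (g := fun u => f u ^ 2 + K) (integrable_const (f t ^ 2))
    (hf2.add (integrable_const K)) measurableSet_Ioc hpt
  rw [integral_add hf2 (integrable_const K)] at hint
  simp only [setIntegral_const, Real.volume_real_Ioc, sub_zero, max_eq_left zero_le_one,
    one_smul] at hint
  linarith

theorem abs_sq_sub_sq_zero_le {ε y : ℝ} (hε : 0 < ε) (hε1 : ε ≤ 1) (hy : y ∈ Icc 0 ε) :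
    |f y ^ 2 - f 0 ^ 2|
      ≤ √ε * (2 * (∫ u in Ioc (0 : ℝ) 1, f u ^ 2) + 2 * ∫ u in Ioc (0 : ℝ) 1, f' u ^ 2) := by
  have hfc : Continuous f := continuous_iff_continuousAt.2 fun x => (hf x).continuousAt
  set P := ∫ u in Ioc (0 : ℝ) 1, f u ^ 2
  set G := ∫ u in Ioc (0 : ℝ) 1, f' u ^ 2
  have hsub : Ι 0 y ⊆ Ioc 0 ε := Ioc_subset_Ioc (le_min le_rfl hy.1) (max_le hε.le hy.2)
  have hdiff : |f y ^ 2 - f 0 ^ 2| ≤ ∫ x in Ioc 0 ε, |2 * f x * f' x| :=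
    (abs_sq_sub_sq_le_integral_uIoc hf hf' 0 y).trans <|
      setIntegral_mono_set ((continuous_const.mul hfc).mul hf').abs.integrableOn_Ioc
        (ae_of_all _ fun _ => abs_nonneg _) hsub.eventuallyLE
  have hf2 : ∫ x in Ioc 0 ε, f x ^ 2 ≤ (2 * P + G) * ε := by
    have := norm_setIntegral_le_of_norm_le_const (μ := volume) (s := Ioc 0 ε)
      (f := fun x => f x ^ 2) (by simp) fun x hx => by
        rw [Real.norm_of_nonneg (sq_nonneg _)]
        exact sq_le_of_mem_Icc_zero_one hf hf' ⟨hx.1.le, hx.2.trans hε1⟩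
    simpa [Real.norm_of_nonneg (setIntegral_nonneg measurableSet_Ioc fun x _ => sq_nonneg (f x)),
      hε.le] using this
  have hf'2 : ∫ x in Ioc 0 ε, f' x ^ 2 ≤ G :=
    setIntegral_mono_set (hf'.pow 2).integrableOn_Ioc (ae_of_all _ fun _ => sq_nonneg _)
      (Ioc_subset_Ioc le_rfl hε1).eventuallyLE
  have hsq : (√ε)⁻¹ * ε = √ε := by rw [inv_mul_eq_div, Real.div_sqrt]
  calc |f y ^ 2 - f 0 ^ 2|
      ≤ √ε * (∫ x in Ioc 0 ε, f' x ^ 2) + (√ε)⁻¹ * ∫ x in Ioc 0 ε, f x ^ 2 :=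
        hdiff.trans (integral_abs_two_mul_le hf hf' (Real.sqrt_pos.2 hε) 0 ε)
    _ ≤ √ε * G + (√ε)⁻¹ * ((2 * P + G) * ε) := by gcongr
    _ = √ε * (2 * P + 2 * G) := by rw [mul_comm _ ε, ← mul_assoc, hsq]; ring

end OneVariable

section Slices

variable {φ : ℝ × ℝ → ℝ}

theorem abs_sq_sub_sq_zero_le_of_contDiff (hφ : ContDiff ℝ 1 φ) (s : ℝ) {ε y : ℝ} (hε : 0 < ε)
    (hε1 : ε ≤ 1) (hy : y ∈ Icc 0 ε) :
    |φ (y, s) ^ 2 - φ (0, s) ^ 2|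
      ≤ 2 * √ε * ((∫ u in Ioc (0 : ℝ) 1, φ (u, s) ^ 2)
        + ∫ u in Ioc (0 : ℝ) 1, ‖fderiv ℝ φ (u, s)‖ ^ 2) := by
  have hslice : Continuous fun t : ℝ => ((t, s) : ℝ × ℝ) := continuous_id.prodMk continuous_const
  have hderiv : ∀ t, HasDerivAt (fun t => φ (t, s)) (fderiv ℝ φ (t, s) (1, 0)) t := fun t =>
    (hφ.differentiable one_ne_zero (t, s)).hasFDerivAt.comp_hasDerivAt t
      ((hasDerivAt_id t).prodMk (hasDerivAt_const t s))
  have hDφ : Continuous fun t => fderiv ℝ φ (t, s) := (hφ.continuous_fderiv one_ne_zero).comp hslice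
  have hpartial : ∫ u in Ioc (0 : ℝ) 1, fderiv ℝ φ (u, s) (1, 0) ^ 2
      ≤ ∫ u in Ioc (0 : ℝ) 1, ‖fderiv ℝ φ (u, s)‖ ^ 2 := by
    refine setIntegral_mono_on ((hDφ.clm_apply continuous_const).pow 2).integrableOn_Ioc
      (hDφ.norm.pow 2).integrableOn_Ioc measurableSet_Ioc fun u _ => ?_
    have h := (fderiv ℝ φ (u, s)).le_opNorm (1, 0)
    rw [show ‖((1 : ℝ), (0 : ℝ))‖ = 1 by simp [Prod.norm_def], mul_one] at h
    simpa only [Real.norm_eq_abs, sq_abs] using pow_le_pow_left₀ (norm_nonneg _) h 2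
  calc |φ (y, s) ^ 2 - φ (0, s) ^ 2|
      ≤ √ε * (2 * (∫ u in Ioc (0 : ℝ) 1, φ (u, s) ^ 2)
        + 2 * ∫ u in Ioc (0 : ℝ) 1, fderiv ℝ φ (u, s) (1, 0) ^ 2) :=
        abs_sq_sub_sq_zero_le hderiv (hDφ.clm_apply continuous_const) hε hε1 hy
    _ ≤ √ε * (2 * (∫ u in Ioc (0 : ℝ) 1, φ (u, s) ^ 2)
        + 2 * ∫ u in Ioc (0 : ℝ) 1, ‖fderiv ℝ φ (u, s)‖ ^ 2) := by gcongr
    _ = _ := by ring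

end Slices

section Rectangles

variable {a b c d : ℝ}

theorem Continuous.integrable_prod_restrict_Ioc {E : Type*} [NormedAddCommGroup E]
    {g : ℝ × ℝ → E} (hg : Continuous g) :
    Integrable g ((volume.restrict (Ioc a b)).prod (volume.restrict (Ioc c d))) := by
  rw [Measure.prod_restrict, ← Measure.volume_eq_prod]
  exact (hg.continuousOn.integrableOn_compact (isCompact_Icc.prod isCompact_Icc)).mono_set
    (prod_mono Ioc_subset_Icc_self Ioc_subset_Icc_self)

theorem integrable_mul_prod_restrict_Ioc {k g : ℝ × ℝ → ℝ} (hk : Measurable k) {K : ℝ}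
    (hkK : ∀ p, |k p| ≤ K) (hg : Continuous g) :
    Integrable (fun p => k p * g p)
      ((volume.restrict (Ioc a b)).prod (volume.restrict (Ioc c d))) :=
  hg.integrable_prod_restrict_Ioc.bdd_mul hk.aestronglyMeasurable (ae_of_all _ hkK)

theorem setIntegral_Ioo_prod_Ioo_eq_integral_integral {g : ℝ × ℝ → ℝ} (hg : Continuous g) :
    ∫ p in Ioo a b ×ˢ Ioo c d, g p = ∫ s in Ioc c d, ∫ u in Ioc a b, g (u, s) := by
  rw [Measure.volume_eq_prod, ← Measure.prod_restrict, Measure.restrict_congr_set Ioo_ae_eq_Ioc,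
    Measure.restrict_congr_set Ioo_ae_eq_Ioc]
  exact integral_prod_symm g hg.integrable_prod_restrict_Ioc

end Rectangles

theorem inv_mul_integral_integral_div_eq {q : ℝ × ℝ → ℝ} (hqm : Measurable q) {Q : ℝ}
    (hqQ : ∀ p, |q p| ≤ Q) {w : ℝ → ℝ} (hw : Continuous w) {ε : ℝ} (hε : 0 < ε) (l : ℝ) :
    ε⁻¹ * (∫ y in Ioc (0 : ℝ) ε, ∫ s in Ioc (0 : ℝ) l, q (y / ε, s) * w s)
      = ∫ s in Ioc (0 : ℝ) l, (∫ t in Ioc (0 : ℝ) 1, q (t, s)) * w s := by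
  rw [← intervalIntegral.integral_of_le hε.le,
    intervalIntegral.integral_comp_div (fun t => ∫ s in Ioc (0 : ℝ) l, q (t, s) * w s) hε.ne',
    zero_div, div_self hε.ne', smul_eq_mul, ← mul_assoc, inv_mul_cancel₀ hε.ne', one_mul,
    intervalIntegral.integral_of_le zero_le_one,
    integral_integral_swap (f := fun t s => q (t, s) * w s)
      (integrable_mul_prod_restrict_Ioc hqm hqQ (hw.comp continuous_snd))]
  simp only [integral_mul_const]

section Averaging

variable {q : ℝ × ℝ → ℝ} (hqm : Measurable q) {Q : ℝ} (hqQ : ∀ p, |q p| ≤ Q)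
  {φ : ℝ × ℝ → ℝ} (hφ : ContDiff ℝ 1 φ) {ε : ℝ} (hε : 0 < ε) (hε1 : ε ≤ 1) (l : ℝ)
include hqm hqQ hφ hε hε1

theorem abs_integral_mul_sq_sub_le (c : ℝ) {y : ℝ} (hy : y ∈ Icc 0 ε) :
    |(∫ s in Ioc (0 : ℝ) l, q (c, s) * φ (y, s) ^ 2)
        - ∫ s in Ioc (0 : ℝ) l, q (c, s) * φ (0, s) ^ 2|
      ≤ 2 * Q * √ε * ((∫ p in Ioo (0 : ℝ) 1 ×ˢ Ioo (0 : ℝ) l, φ p ^ 2)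
        + ∫ p in Ioo (0 : ℝ) 1 ×ˢ Ioo (0 : ℝ) l, ‖fderiv ℝ φ p‖ ^ 2) := by
  have hφ2 : Continuous fun p => φ p ^ 2 := hφ.continuous.pow 2
  have hDφ2 : Continuous fun p => ‖fderiv ℝ φ p‖ ^ 2 :=
    (hφ.continuous_fderiv one_ne_zero).norm.pow 2
  have hslice : ∀ a, IntegrableOn (fun s => q (c, s) * φ (a, s) ^ 2) (Ioc 0 l) := fun a =>
    (hφ2.comp (continuous_const.prodMk continuous_id)).integrableOn_Ioc.bdd_mul
      (hqm.comp measurable_prodMk_left).aestronglyMeasurable (ae_of_all _ fun s => hqQ _)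
  have hP : Integrable (fun s => ∫ u in Ioc (0 : ℝ) 1, φ (u, s) ^ 2) (volume.restrict (Ioc 0 l)) :=
    hφ2.integrable_prod_restrict_Ioc.integral_prod_right
  have hG : Integrable (fun s => ∫ u in Ioc (0 : ℝ) 1, ‖fderiv ℝ φ (u, s)‖ ^ 2)
      (volume.restrict (Ioc 0 l)) :=
    hDφ2.integrable_prod_restrict_Ioc.integral_prod_right
  rw [setIntegral_Ioo_prod_Ioo_eq_integral_integral hφ2,
    setIntegral_Ioo_prod_Ioo_eq_integral_integral hDφ2, ← integral_add hP hG,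
    ← integral_const_mul, ← integral_sub (hslice y) (hslice 0), ← Real.norm_eq_abs]
  refine norm_integral_le_of_norm_le ((hP.add hG).const_mul _) (ae_of_all _ fun s => ?_)
  rw [Real.norm_eq_abs, ← mul_sub, abs_mul]
  calc |q (c, s)| * |φ (y, s) ^ 2 - φ (0, s) ^ 2|
      ≤ Q * (2 * √ε * ((∫ u in Ioc (0 : ℝ) 1, φ (u, s) ^ 2)
        + ∫ u in Ioc (0 : ℝ) 1, ‖fderiv ℝ φ (u, s)‖ ^ 2)) :=
        mul_le_mul (hqQ _) (abs_sq_sub_sq_zero_le_of_contDiff hφ s hε hε1 hy) (abs_nonneg _)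
          ((abs_nonneg _).trans (hqQ (c, s)))
    _ = _ := by ring

theorem abs_inv_mul_integral_integral_sub_le :
    |ε⁻¹ * (∫ y in Ioc (0 : ℝ) ε, ∫ s in Ioc (0 : ℝ) l, q (y / ε, s) * φ (y, s) ^ 2)
        - ε⁻¹ * (∫ y in Ioc (0 : ℝ) ε, ∫ s in Ioc (0 : ℝ) l, q (y / ε, s) * φ (0, s) ^ 2)|
      ≤ 2 * Q * √ε * ((∫ p in Ioo (0 : ℝ) 1 ×ˢ Ioo (0 : ℝ) l, φ p ^ 2)
        + ∫ p in Ioo (0 : ℝ) 1 ×ˢ Ioo (0 : ℝ) l, ‖fderiv ℝ φ p‖ ^ 2) := by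
  have hqε : Measurable fun p : ℝ × ℝ => q (p.1 / ε, p.2) :=
    hqm.comp ((measurable_fst.div_const ε).prodMk measurable_snd)
  have hF : ∀ g : ℝ × ℝ → ℝ, Continuous g →
      Integrable (fun y => ∫ s in Ioc (0 : ℝ) l, q (y / ε, s) * g (y, s))
        (volume.restrict (Ioc 0 ε)) := fun g hg =>
    (integrable_mul_prod_restrict_Ioc hqε (fun _ => hqQ _) hg).integral_prod_left
  have hφc := hφ.continuous
  rw [← mul_sub, ← integral_sub (hF (fun p => φ p ^ 2) (by fun_prop))
    (hF (fun p => φ (0, p.2) ^ 2) (by fun_prop)), abs_mul,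
    abs_inv, abs_of_pos hε, inv_mul_le_iff₀ hε, ← Real.norm_eq_abs, mul_comm ε]
  refine (norm_setIntegral_le_of_norm_le_const (by simp) fun y hy => (Real.norm_eq_abs _).trans_le
    (abs_integral_mul_sq_sub_le hqm hqQ hφ hε hε1 l (y / ε) ⟨hy.1.le, hy.2⟩)).trans_eq ?_
  simp [hε.le]

end Averaging

theorem averaged_mass_trace_estimate_general (l : ℝ)
    (q : ℝ × ℝ → ℝ) (hqm : Measurable q) (Q : ℝ) (hqQ : ∀ p, q p ≤ Q)
    (hqpos : ∀ p, 0 < q p) :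
    ∃ C > 0, ∀ ε : ℝ, 0 < ε → ε ≤ 1 → ∀ φ : ℝ × ℝ → ℝ, ContDiff ℝ 1 φ →
      |ε⁻¹ * (∫ y in Ioc (0:ℝ) ε, ∫ s in Ioc (0:ℝ) l, q (y / ε, s) * (φ (y, s))^2)
          - ∫ s in Ioc (0:ℝ) l, (∫ t in Ioc (0:ℝ) 1, q (t, s)) * (φ (0, s))^2|
        ≤ C * Real.sqrt ε * ((∫ p in Ioo (0:ℝ) 1 ×ˢ Ioo (0:ℝ) l, (φ p)^2)
            + ∫ p in Ioo (0:ℝ) 1 ×ˢ Ioo (0:ℝ) l, ‖fderiv ℝ φ p‖^2) := by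
  have hqabs : ∀ p, |q p| ≤ Q := fun p => (abs_of_pos (hqpos p)).trans_le (hqQ p)
  refine ⟨2 * Q, by linarith [hqpos 0, hqQ 0], fun ε hε hε1 φ hφ => ?_⟩
  have hφc := hφ.continuous
  rw [← inv_mul_integral_integral_div_eq hqm hqabs (w := fun s => φ (0, s) ^ 2) (by fun_prop) hε l]
  exact abs_inv_mul_integral_integral_sub_le hqm hqabs hφ hε hε1 l

/-- With `q` measurable, bounded and positive on `(0,1)×(0,l)`,
`qᵉ(y,s) = q(y/ε, s)` and `κ(s) = ∫₀¹ q(t,s) dt`, there is `C > 0` independent of `ε`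
such that for all `φ ∈ H¹((0,1)×(0,l))` (formalized, by density, for `C¹` functions)
`|ε⁻¹ ∫_{(0,ε)×(0,l)} qᵉ |φ|² - ∫₀^l κ |φ(0,·)|²| ≤ C ε^{1/2} ‖φ‖²_{H¹}`. -/
theorem averaged_mass_trace_estimate (l : ℝ) (hl : 0 < l)
    (q : ℝ × ℝ → ℝ) (hqm : Measurable q) (Q : ℝ) (hqQ : ∀ p, q p ≤ Q)
    (hqpos : ∀ p, 0 < q p) :
    ∃ C > 0, ∀ ε : ℝ, 0 < ε → ε ≤ 1 → ∀ φ : ℝ × ℝ → ℝ, ContDiff ℝ 1 φ →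
      |ε⁻¹ * (∫ y in Ioc (0:ℝ) ε, ∫ s in Ioc (0:ℝ) l, q (y / ε, s) * (φ (y, s))^2)
          - ∫ s in Ioc (0:ℝ) l, (∫ t in Ioc (0:ℝ) 1, q (t, s)) * (φ (0, s))^2|
        ≤ C * Real.sqrt ε * ((∫ p in Ioo (0:ℝ) 1 ×ˢ Ioo (0:ℝ) l, (φ p)^2)
            + ∫ p in Ioo (0:ℝ) 1 ×ˢ Ioo (0:ℝ) l, ‖fderiv ℝ φ p‖^2) :=
  averaged_mass_trace_estimate_general l q hqm Q hqQ hqpos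
end

section
/- Let $L:H\to H$ be a linear, self-adjoint, compact operator on a separable Hilbert space, and let $v_1,\dots,v_J\in H$ and $\mu\in\mathbb{R}$, $r>0$, $\theta\ge 0$, $d>r$ satisfy: $\|Lv_i-\mu v_i\|\le r$ for each $i$, and $|(v_i,v_j)-\delta_{ij}|\le\theta$ for all $i,j=1,\dots,J$. If $r d^{-1}+\theta < J^{-1}$, then the total multiplicity of eigenvalues of $L$ lying in the interval $[\mu-d,\mu+d]$ is at least $J$. -/
/-!
Let `K` be the closed span of the eigenvectors of `L` with eigenvalue in `[μ - d, μ + d]`. By the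
spectral theorem finite sums of eigenvectors are dense in `H`, and for such a sum `x` the
components outside `K` have eigenvalues `t` with `|t - μ| ≥ d`, so Pythagoras gives
`d ‖x - P_K x‖ ≤ ‖L x - μ x‖`; by density this holds for every `x`. Hence each quasimode `v i`
lies within `r / d` of its projection `P_K (v i)`, and the Gram matrix of these projections is
within `r / d + θ` of the identity. When `J (r / d + θ) < 1` that matrix is strictly diagonally
dominant, hence invertible, so the `J` projections are linearly independent in `K`.
-/

open Module Set
open scoped RealInnerProductSpace

open Finset Matrix in
theorem linearIndependent_of_abs_inner_sub_ite_le {F ι : Type*} [NormedAddCommGroup F]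
    [InnerProductSpace ℝ F] [Fintype ι] [DecidableEq ι] {u : ι → F} {ε : ℝ}
    (hu : ∀ i j, |⟪u i, u j⟫ - if i = j then 1 else 0| ≤ ε)
    (hε : Fintype.card ι * ε < 1) : LinearIndependent ℝ u := by
  refine linearIndependent_of_det_gram_ne_zero (det_ne_zero_of_sum_row_lt_diag fun k => ?_)
  have hdiag : 1 - ε ≤ ‖gram ℝ u k k‖ := by
    have := hu k k
    rw [if_pos rfl] at this
    rw [gram_apply, Real.norm_eq_abs]
    linarith [le_abs_self ⟪u k, u k⟫, (abs_le.mp this).1]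
  have hoff : ∑ j ∈ univ.erase k, ‖gram ℝ u k j‖ ≤ ∑ j ∈ univ.erase k, ε :=
    sum_le_sum fun j hj => by
      simpa [gram_apply, (ne_of_mem_erase hj).symm] using hu k j
  have hcount : ∑ j ∈ univ.erase k, ε + ε = Fintype.card ι * ε := by
    rw [sum_erase_add _ _ (mem_univ k), sum_const, card_univ, nsmul_eq_mul]
  linarith

namespace Submodule

variable {F : Type*} [NormedAddCommGroup F] [InnerProductSpace ℝ F]
  (K : Submodule ℝ F) [K.HasOrthogonalProjection]

theorem norm_sub_starProjection_le {x y : F} (hy : y ∈ K) :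
    ‖x - K.starProjection x‖ ≤ ‖x - y‖ := by
  rw [starProjection_minimal]
  exact ciInf_le ⟨0, by rintro _ ⟨z, rfl⟩; positivity⟩ (⟨y, hy⟩ : K)

theorem inner_starProjection_starProjection (x y : F) :
    ⟪K.starProjection x, K.starProjection y⟫ =
      ⟪x, y⟫ - ⟪x - K.starProjection x, y - K.starProjection y⟫ := by
  have hx := inner_left_of_mem_orthogonal (K.starProjection_apply_mem y)
    (K.sub_starProjection_mem_orthogonal x)
  have hy := inner_right_of_mem_orthogonal (K.starProjection_apply_mem x)
    (K.sub_starProjection_mem_orthogonal y)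
  simp only [inner_sub_left, inner_sub_right] at hx hy ⊢
  linarith

theorem abs_inner_starProjection_sub_inner_le {x y : F} {ρ : ℝ} (hρ : ρ ≤ 1)
    (hx : ‖x - K.starProjection x‖ ≤ ρ) (hy : ‖y - K.starProjection y‖ ≤ ρ) :
    |⟪K.starProjection x, K.starProjection y⟫ - ⟪x, y⟫| ≤ ρ := by
  rw [inner_starProjection_starProjection, sub_sub_cancel_left, abs_neg]
  calc _ ≤ ‖x - K.starProjection x‖ * ‖y - K.starProjection y‖ := abs_real_inner_le_norm _ _
    _ ≤ ρ * 1 := mul_le_mul hx (hy.trans hρ) (norm_nonneg _) ((norm_nonneg _).trans hx)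
    _ = ρ := mul_one ρ

end Submodule

section Spectral

open End

variable {H : Type*} [NormedAddCommGroup H] [InnerProductSpace ℝ H]

open Finset in
theorem LinearMap.IsSymmetric.exists_mem_iSup_eigenspace_mul_norm_sub_le
    {L : H →ₗ[ℝ] H} (hL : L.IsSymmetric) {S : Set ℝ} {μ d : ℝ} (hd : 0 ≤ d)
    (hS : ∀ t ∉ S, d ≤ |t - μ|) {x : H} (hx : x ∈ ⨆ t, eigenspace L t) :
    ∃ a ∈ ⨆ t ∈ S, eigenspace L t, d * ‖x - a‖ ≤ ‖L x - μ • x‖ := by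
  classical
  obtain ⟨f, rfl⟩ := (Submodule.mem_iSup_iff_exists_dfinsupp' _ x).mp hx
  set s := f.support
  have pythagoras (l : ∀ t, eigenspace L t) (u : Finset ℝ) :
      ‖∑ t ∈ u, (l t : H)‖ ^ 2 = ∑ t ∈ u, ‖l t‖ ^ 2 :=
    hL.orthogonalFamily_eigenspaces.norm_sum l u
  refine ⟨∑ t ∈ s with t ∈ S, (f t : H), ?_, ?_⟩
  · exact Submodule.sum_mem _ fun t ht =>
      Submodule.mem_iSup_of_mem t (Submodule.mem_iSup_of_mem (mem_filter.mp ht).2 (f t).2)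
  have hout : f.sum (fun _ y => (y : H)) - ∑ t ∈ s with t ∈ S, (f t : H)
      = ∑ t ∈ s with t ∉ S, (f t : H) := by
    rw [DFinsupp.sum, ← sum_filter_add_sum_filter_not s (· ∈ S), add_sub_cancel_left]
  have hshift : L (f.sum fun _ y => (y : H)) - μ • f.sum (fun _ y => (y : H))
      = ∑ t ∈ s, (((t - μ) • f t : eigenspace L t) : H) := by
    simp only [DFinsupp.sum, map_sum, smul_sum, ← sum_sub_distrib, sub_smul, Submodule.coe_sub,
      Submodule.coe_smul, mem_eigenspace_iff.mp (f _).2]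
    rfl
  have hsq : (d * ‖∑ t ∈ s with t ∉ S, (f t : H)‖) ^ 2
      ≤ ‖∑ t ∈ s, (((t - μ) • f t : eigenspace L t) : H)‖ ^ 2 := by
    rw [mul_pow, pythagoras, pythagoras, mul_sum]
    calc ∑ t ∈ s with t ∉ S, d ^ 2 * ‖f t‖ ^ 2
        ≤ ∑ t ∈ s with t ∉ S, ‖(t - μ) • f t‖ ^ 2 := sum_le_sum fun t ht => by
          rw [norm_smul, mul_pow, Real.norm_eq_abs]
          gcongr
          exact hS t (mem_filter.mp ht).2
      _ ≤ ∑ t ∈ s, ‖(t - μ) • f t‖ ^ 2 :=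
          sum_le_sum_of_subset_of_nonneg (filter_subset _ _) fun _ _ _ => by positivity
  rw [hout, hshift]
  exact pow_le_pow_iff_left₀ (by positivity) (norm_nonneg _) two_ne_zero |>.mp hsq

theorem IsCompactOperator.mul_norm_sub_starProjection_le [CompleteSpace H] {L : H →L[ℝ] H}
    (hcp : IsCompactOperator L) (hL : (L : H →ₗ[ℝ] H).IsSymmetric) {S : Set ℝ} {μ d : ℝ}
    (hd : 0 ≤ d) (hS : ∀ t ∉ S, d ≤ |t - μ|) (x : H) :
    d * ‖x - (⨆ t ∈ S, eigenspace (L : H →ₗ[ℝ] H) t).topologicalClosure.starProjection x‖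
      ≤ ‖L x - μ • x‖ := by
  have hdense : Dense ((⨆ t, eigenspace (L : H →ₗ[ℝ] H) t : Submodule ℝ H) : Set H) := by
    rw [Submodule.dense_iff_topologicalClosure_eq_top, ← Submodule.orthogonal_orthogonal_eq_closure,
      L.orthogonalComplement_iSup_eigenspaces_eq_bot hcp hL, Submodule.bot_orthogonal_eq_top]
  refine hdense.induction (fun y hy => ?_) (isClosed_le (by fun_prop) (by fun_prop)) x
  obtain ⟨a, ha, hya⟩ := hL.exists_mem_iSup_eigenspace_mul_norm_sub_le hd hS hy
  exact (mul_le_mul_of_nonneg_left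
    (Submodule.norm_sub_starProjection_le _ (Submodule.le_topologicalClosure _ ha)) hd).trans hya

end Spectral

theorem quasimode_family_multiplicity_general
    {H : Type*} [NormedAddCommGroup H] [InnerProductSpace ℝ H] [CompleteSpace H]
    (L : H →L[ℝ] H) (hsa : IsSelfAdjoint L) (hcp : IsCompactOperator L)
    (J : ℕ) (v : Fin J → H) (μ r θ d : ℝ) (hd : r < d)
    (hres : ∀ i, ‖L (v i) - μ • v i‖ ≤ r)
    (hortho : ∀ i j, |⟪v i, v j⟫ - (if i = j then (1:ℝ) else 0)| ≤ θ)
    (hsmall : r * d⁻¹ + θ < (J : ℝ)⁻¹) :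
    (J : Cardinal) ≤ Module.rank ℝ
      ((⨆ t ∈ Icc (μ - d) (μ + d),
        Module.End.eigenspace (L : H →ₗ[ℝ] H) t).topologicalClosure) := by
  rcases J.eq_zero_or_pos with rfl | hJ
  · simp
  set K :=
    (⨆ t ∈ Icc (μ - d) (μ + d), Module.End.eigenspace (L : H →ₗ[ℝ] H) t).topologicalClosure
  have hd0 : 0 < d := ((norm_nonneg _).trans (hres ⟨0, hJ⟩)).trans_lt hd
  have hS : ∀ t ∉ Icc (μ - d) (μ + d), d ≤ |t - μ| := fun t ht => by
    by_contra! h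
    obtain ⟨h₁, h₂⟩ := abs_lt.mp h
    exact ht ⟨by linarith, by linarith⟩
  have hdist i : ‖v i - K.starProjection (v i)‖ ≤ r / d := by
    rw [le_div_iff₀' hd0]
    exact (hcp.mul_norm_sub_starProjection_le hsa.isSymmetric hd0.le hS _).trans (hres i)
  have hρ : r / d ≤ 1 := (div_le_one hd0).mpr hd.le
  have hgram i j : |⟪K.orthogonalProjectionOnto (v i), K.orthogonalProjectionOnto (v j)⟫
      - if i = j then 1 else 0| ≤ r / d + θ := by
    rw [Submodule.coe_inner, ← K.starProjection_apply, ← K.starProjection_apply]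
    exact (abs_sub_le _ ⟪v i, v j⟫ _).trans <| add_le_add
      (K.abs_inner_starProjection_sub_inner_le hρ (hdist i) (hdist j)) (hortho i j)
  have hε : Fintype.card (Fin J) * (r / d + θ) < 1 := by
    rw [Fintype.card_fin, ← lt_inv_mul_iff₀ (by positivity), mul_one, div_eq_mul_inv]
    exact hsmall
  simpa using (linearIndependent_of_abs_inner_sub_ite_le hgram hε).cardinal_lift_le_rank

/-- A family of `J` quasimodes `(μ, v₁), …, (μ, v_J)` with error `r` and
deviation from orthogonality `θ` such that `r d⁻¹ + θ < J⁻¹` forces the total multiplicity of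
the eigenvalues of the compact self-adjoint operator `L` in `[μ-d, μ+d]` (the dimension of the
range of the spectral projection onto that interval) to be at least `J`. -/
theorem quasimode_family_multiplicity
    {H : Type*} [NormedAddCommGroup H] [InnerProductSpace ℝ H] [CompleteSpace H]
    [TopologicalSpace.SeparableSpace H]
    (L : H →L[ℝ] H) (hsa : IsSelfAdjoint L) (hcp : IsCompactOperator L)
    (J : ℕ) (v : Fin J → H) (μ r θ d : ℝ) (hr : 0 < r) (hθ : 0 ≤ θ) (hd : r < d)
    (hres : ∀ i, ‖L (v i) - μ • v i‖ ≤ r)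
    (hortho : ∀ i j, |⟪v i, v j⟫ - (if i = j then (1:ℝ) else 0)| ≤ θ)
    (hsmall : r * d⁻¹ + θ < (J : ℝ)⁻¹) :
    (J : Cardinal) ≤ Module.rank ℝ
      ((⨆ t ∈ Icc (μ - d) (μ + d),
        Module.End.eigenspace (L : H →ₗ[ℝ] H) t).topologicalClosure) :=
  quasimode_family_multiplicity_general L hsa hcp J v μ r θ d hd hres hortho hsmall
end

section
/- Let $\Omega'=(0,1)\times(0,l)$ and $\omega^\varepsilon=(0,\varepsilon)\times(0,l)$. Suppose $u^\varepsilon\in H^1(\Omega')$ satisfies $\|u^\varepsilon\|_{H^1(\Omega')}\le 1$ and $\varepsilon^{-1}\int_{\omega^\varepsilon}|u^\varepsilon|^2\,dx \le c_1\varepsilon^{m-1}$ for some $m>1$ and $c_1>0$. Then there is a constant $c_2>0$ independent of $\varepsilon$ such that the trace satisfies $\int_0^l |u^\varepsilon(0,s)|^2\,ds \le c_2(\varepsilon^{m-1}+\varepsilon^{1/2})$. -/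
open MeasureTheory Set

/-!
On each horizontal line, `u(0,s)² = u(y,s)² - ∫₀^y ∂_y(u²)`; averaging over `y ∈ (0,ε)` and
Young's inequality `|∂_y(u²)| ≤ δ⁻¹ u² + δ |∇u|²` give
`u(0,s)² ≤ ∫₀^ε ((ε⁻¹ + δ⁻¹) u² + δ |∇u|²) dy`. Integrating in `s` and taking `δ = √ε`, the
`u²` term is `(1 + √ε) ε⁻¹ ∫_{ω^ε} u² ≤ 2 c₁ ε^{m-1}` and the gradient term is at most `√ε`
by the `H¹` bound.
-/

theorem le_inv_mul_integral_add_integral_abs_deriv {g g' : ℝ → ℝ} {ε : ℝ} (hε : 0 < ε)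
    (hg : ∀ t, HasDerivAt g (g' t) t) (hg' : IntervalIntegrable g' volume 0 ε) :
    g 0 ≤ ε⁻¹ * (∫ y in 0..ε, g y) + ∫ y in 0..ε, |g' y| := by
  have hgc : Continuous g := continuous_iff_continuousAt.2 fun t => (hg t).continuousAt
  set V := ∫ y in 0..ε, |g' y|
  have hpoint : ∀ y ∈ Icc 0 ε, g 0 ≤ g y + V := by
    intro y ⟨hy0, hyε⟩
    have hftc : ∫ t in 0..y, g' t = g y - g 0 :=
      intervalIntegral.integral_eq_sub_of_hasDerivAt (fun t _ => hg t)
        (hg'.mono_set (uIcc_subset_uIcc_left (mem_uIcc_of_le hy0 hyε)))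
    calc g 0 = g y - ∫ t in 0..y, g' t := by rw [hftc]; ring
      _ ≤ g y + ∫ t in 0..y, |g' t| := by
        linarith [neg_abs_le (∫ t in 0..y, g' t),
          intervalIntegral.abs_integral_le_integral_abs (f := g') (μ := volume) hy0]
      _ ≤ g y + V := by
        gcongr
        exact intervalIntegral.integral_mono_interval le_rfl hy0 hyε
          (Filter.Eventually.of_forall fun t => abs_nonneg _) hg'.abs
  have havg := intervalIntegral.integral_mono_on hε.le (intervalIntegrable_const (μ := volume))
    ((hgc.intervalIntegrable 0 ε).add intervalIntegrable_const) hpoint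
  rw [intervalIntegral.integral_add (hgc.intervalIntegrable 0 ε) intervalIntegrable_const,
    intervalIntegral.integral_const, intervalIntegral.integral_const, sub_zero, smul_eq_mul,
    smul_eq_mul] at havg
  rw [← sub_le_iff_le_add, le_inv_mul_iff₀ hε]
  linarith

theorem sq_le_integral_sq_add_sq_deriv {f f' : ℝ → ℝ} {ε δ : ℝ} (hε : 0 < ε) (hδ : 0 < δ)
    (hf : ∀ t, HasDerivAt f (f' t) t) (hf' : Continuous f') :
    f 0 ^ 2 ≤ ∫ y in 0..ε, ((ε⁻¹ + δ⁻¹) * f y ^ 2 + δ * f' y ^ 2) := by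
  have hfc : Continuous f := continuous_iff_continuousAt.2 fun t => (hf t).continuousAt
  have hsq : ∀ t, HasDerivAt (fun y => f y ^ 2) (2 * f t * f' t) t := fun t =>
    ((hf t).pow 2).congr_deriv (by ring)
  have young : ∀ y, |2 * f y * f' y| ≤ δ⁻¹ * f y ^ 2 + δ * f' y ^ 2 := fun y => by
    simpa [abs_mul, sq_abs, mul_assoc] using
      two_mul_le_add_mul_sq (a := |f y|) (b := |f' y|) (inv_pos.2 hδ)
  have hI : ∀ {φ : ℝ → ℝ}, Continuous φ → IntervalIntegrable φ volume 0 ε :=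
    fun hφ => hφ.intervalIntegrable 0 ε
  calc f 0 ^ 2 ≤ ε⁻¹ * (∫ y in 0..ε, f y ^ 2) + ∫ y in 0..ε, |2 * f y * f' y| :=
        le_inv_mul_integral_add_integral_abs_deriv hε hsq (hI (by fun_prop))
    _ ≤ ε⁻¹ * (∫ y in 0..ε, f y ^ 2) + ∫ y in 0..ε, (δ⁻¹ * f y ^ 2 + δ * f' y ^ 2) := by
        gcongr
        exact intervalIntegral.integral_mono_on hε.le (hI (by fun_prop)) (hI (by fun_prop))
          fun y _ => young y
    _ = ∫ y in 0..ε, ((ε⁻¹ + δ⁻¹) * f y ^ 2 + δ * f' y ^ 2) := by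
        rw [← intervalIntegral.integral_const_mul, ← intervalIntegral.integral_add
          (hI (by fun_prop)) (hI (by fun_prop))]
        congr 1
        ext y
        ring

theorem setIntegral_prod_symm {α β E : Type*} [MeasurableSpace α] [MeasurableSpace β]
    [NormedAddCommGroup E] [NormedSpace ℝ E] {μ : Measure α} {ν : Measure β}
    [SFinite μ] [SFinite ν] {f : α × β → E} {s : Set α} {t : Set β}
    (hf : IntegrableOn f (s ×ˢ t) (μ.prod ν)) :
    ∫ z in s ×ˢ t, f z ∂μ.prod ν = ∫ y in t, ∫ x in s, f (x, y) ∂μ ∂ν := by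
  rw [IntegrableOn, ← Measure.prod_restrict] at hf
  rw [← Measure.prod_restrict]
  exact integral_prod_symm f hf

theorem Continuous.integrableOn_Ioo_prod_Ioo {f : ℝ × ℝ → ℝ} (hf : Continuous f) (a b c d : ℝ) :
    IntegrableOn f (Ioo a b ×ˢ Ioo c d) :=
  (hf.continuousOn.integrableOn_compact (isCompact_Icc.prod isCompact_Icc)).mono_set
    (prod_mono Ioo_subset_Icc_self Ioo_subset_Icc_self)

theorem abs_fderiv_apply_one_zero_le {u : ℝ × ℝ → ℝ} (p : ℝ × ℝ) :
    |fderiv ℝ u p (1, 0)| ≤ ‖fderiv ℝ u p‖ := by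
  simpa [Prod.norm_def] using (fderiv ℝ u p).le_opNorm (1, 0)

theorem sq_apply_zero_le_integral {u : ℝ × ℝ → ℝ} (hu : ContDiff ℝ 1 u) {ε δ : ℝ} (hε : 0 < ε)
    (hδ : 0 < δ) (s : ℝ) :
    u (0, s) ^ 2 ≤
      ∫ y in Ioo 0 ε, ((ε⁻¹ + δ⁻¹) * u (y, s) ^ 2 + δ * ‖fderiv ℝ u (y, s)‖ ^ 2) := by
  have hDu : Continuous (fderiv ℝ u) := hu.continuous_fderiv one_ne_zero
  have hslice : ∀ t, HasDerivAt (fun y => u (y, s)) (fderiv ℝ u (t, s) (1, 0)) t := fun t =>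
    ((hu.differentiable one_ne_zero (t, s)).hasFDerivAt).comp_hasDerivAt t
      ((hasDerivAt_id t).prodMk (hasDerivAt_const t s))
  have hI : ∀ {φ : ℝ → ℝ}, Continuous φ → IntervalIntegrable φ volume 0 ε :=
    fun hφ => hφ.intervalIntegrable 0 ε
  have hu' : Continuous u := hu.continuous
  rw [← integral_Ioc_eq_integral_Ioo, ← intervalIntegral.integral_of_le hε.le]
  refine (sq_le_integral_sq_add_sq_deriv hε hδ hslice (by fun_prop)).trans ?_
  refine intervalIntegral.integral_mono_on hε.le (hI (by fun_prop)) (hI (by fun_prop))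
    fun y _ => ?_
  gcongr _ + δ * ?_
  exact sq_le_sq.2 ((abs_fderiv_apply_one_zero_le _).trans_eq (abs_norm _).symm)

theorem integral_sq_trace_le {u : ℝ × ℝ → ℝ} (hu : ContDiff ℝ 1 u) {ε δ : ℝ} (hε : 0 < ε)
    (hδ : 0 < δ) (l : ℝ) :
    ∫ s in Ioc 0 l, u (0, s) ^ 2 ≤
      (ε⁻¹ + δ⁻¹) * (∫ p in Ioo 0 ε ×ˢ Ioo 0 l, u p ^ 2) +
        δ * ∫ p in Ioo 0 ε ×ˢ Ioo 0 l, ‖fderiv ℝ u p‖ ^ 2 := by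
  have hDu : Continuous (fderiv ℝ u) := hu.continuous_fderiv one_ne_zero
  have hu' : Continuous u := hu.continuous
  set h : ℝ × ℝ → ℝ := fun p => (ε⁻¹ + δ⁻¹) * u p ^ 2 + δ * ‖fderiv ℝ u p‖ ^ 2
  have hbox : ∀ {φ : ℝ × ℝ → ℝ}, Continuous φ → IntegrableOn φ (Ioo 0 ε ×ˢ Ioo 0 l) :=
    fun hφ => hφ.integrableOn_Ioo_prod_Ioo 0 ε 0 l
  have hh : IntegrableOn h (Ioo 0 ε ×ˢ Ioo 0 l) := hbox (by fun_prop)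
  calc ∫ s in Ioc 0 l, u (0, s) ^ 2 = ∫ s in Ioo 0 l, u (0, s) ^ 2 :=
        integral_Ioc_eq_integral_Ioo
    _ ≤ ∫ s in Ioo 0 l, ∫ y in Ioo 0 ε, h (y, s) := by
        refine setIntegral_mono_on ?_ ?_ measurableSet_Ioo fun s _ =>
          sq_apply_zero_le_integral hu hε hδ s
        · exact (Continuous.integrableOn_Icc (by fun_prop)).mono_set Ioo_subset_Icc_self
        · rw [Measure.volume_eq_prod, IntegrableOn, ← Measure.prod_restrict] at hh
          exact hh.integral_prod_right
    _ = ∫ p in Ioo 0 ε ×ˢ Ioo 0 l, h p := by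
        rw [Measure.volume_eq_prod] at hh ⊢
        exact (setIntegral_prod_symm hh).symm
    _ = _ := by
        rw [integral_add ((hbox (by fun_prop)).const_mul _) ((hbox (by fun_prop)).const_mul _),
          integral_const_mul, integral_const_mul]

theorem integral_norm_fderiv_sq_le_of_le_one {u : ℝ × ℝ → ℝ} (hu : ContDiff ℝ 1 u) {ε : ℝ}
    (hε1 : ε ≤ 1) (l : ℝ) :
    ∫ p in Ioo 0 ε ×ˢ Ioo 0 l, ‖fderiv ℝ u p‖ ^ 2 ≤
      (∫ p in Ioo 0 1 ×ˢ Ioo 0 l, u p ^ 2) + ∫ p in Ioo 0 1 ×ˢ Ioo 0 l, ‖fderiv ℝ u p‖ ^ 2 := by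
  have hL2 : 0 ≤ ∫ p in Ioo 0 1 ×ˢ Ioo 0 l, u p ^ 2 :=
    setIntegral_nonneg (measurableSet_Ioo.prod measurableSet_Ioo) fun p _ => sq_nonneg _
  have hmono : ∫ p in Ioo 0 ε ×ˢ Ioo 0 l, ‖fderiv ℝ u p‖ ^ 2 ≤
      ∫ p in Ioo 0 1 ×ˢ Ioo 0 l, ‖fderiv ℝ u p‖ ^ 2 :=
    setIntegral_mono_set ((hu.continuous_fderiv one_ne_zero).norm.pow 2
        |>.integrableOn_Ioo_prod_Ioo 0 1 0 l)
      (Filter.Eventually.of_forall fun p => sq_nonneg _)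
      (prod_mono (Ioo_subset_Ioo_right hε1) subset_rfl).eventuallyLE
  linarith

theorem trace_smallness_estimate_general (l m c₁ : ℝ) (hc₁ : 0 < c₁) :
    ∃ c₂ > 0, ∀ ε : ℝ, 0 < ε → ε ≤ 1 → ∀ u : ℝ × ℝ → ℝ, ContDiff ℝ 1 u →
      ((∫ p in Ioo (0:ℝ) 1 ×ˢ Ioo (0:ℝ) l, (u p)^2)
          + (∫ p in Ioo (0:ℝ) 1 ×ˢ Ioo (0:ℝ) l, ‖fderiv ℝ u p‖^2) ≤ 1) →
      (ε⁻¹ * ∫ p in Ioo (0:ℝ) ε ×ˢ Ioo (0:ℝ) l, (u p)^2 ≤ c₁ * ε ^ (m - 1)) →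
      (∫ s in Ioc (0:ℝ) l, (u (0, s))^2) ≤ c₂ * (ε ^ (m - 1) + Real.sqrt ε) := by
  refine ⟨2 * c₁ + 1, by positivity, fun ε hε hε1 u hu hH1 hsmall => ?_⟩
  set δ := Real.sqrt ε
  have hδ : 0 < δ := Real.sqrt_pos.2 hε
  have hδ1 : δ ≤ 1 := Real.sqrt_le_one.2 hε1
  have hweight : ε⁻¹ + δ⁻¹ = (1 + δ) * ε⁻¹ := by
    rw [← Real.sq_sqrt hε.le]
    field_simp
    ring
  have hA : 0 ≤ ε⁻¹ * ∫ p in Ioo (0:ℝ) ε ×ˢ Ioo (0:ℝ) l, (u p)^2 :=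
    mul_nonneg (inv_nonneg.2 hε.le) (setIntegral_nonneg (measurableSet_Ioo.prod measurableSet_Ioo)
      fun p _ => sq_nonneg _)
  have hB := (integral_norm_fderiv_sq_le_of_le_one hu hε1 l).trans hH1
  have hpow : 0 ≤ ε ^ (m - 1) := Real.rpow_nonneg hε.le _
  calc (∫ s in Ioc (0:ℝ) l, (u (0, s))^2)
      ≤ (1 + δ) * (ε⁻¹ * ∫ p in Ioo (0:ℝ) ε ×ˢ Ioo (0:ℝ) l, (u p)^2) +
          δ * ∫ p in Ioo (0:ℝ) ε ×ˢ Ioo (0:ℝ) l, ‖fderiv ℝ u p‖^2 := by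
        rw [← mul_assoc, ← hweight]
        exact integral_sq_trace_le hu hε hδ l
    _ ≤ 2 * (c₁ * ε ^ (m - 1)) + δ * 1 :=
        add_le_add (mul_le_mul (by linarith) hsmall hA zero_le_two)
          (mul_le_mul_of_nonneg_left hB hδ.le)
    _ ≤ (2 * c₁ + 1) * (ε ^ (m - 1) + δ) := by nlinarith [mul_nonneg hc₁.le hδ.le]

/-- If `u^ε ∈ H¹((0,1)×(0,l))` (formalized, by density, for `C¹` functions,
with the `H¹` norm squared written as `∫ u² + ∫ ‖∇u‖²`) satisfies `‖u^ε‖_{H¹} ≤ 1` and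
`ε⁻¹ ∫_{(0,ε)×(0,l)} |u^ε|² ≤ c₁ ε^{m-1}` with `m > 1`, then the trace on `{y=0}` satisfies
`∫₀^l |u^ε(0,s)|² ds ≤ c₂ (ε^{m-1} + ε^{1/2})` with `c₂` independent of `ε`. -/
theorem trace_smallness_estimate (l m c₁ : ℝ) (hl : 0 < l) (hm : 1 < m) (hc₁ : 0 < c₁) :
    ∃ c₂ > 0, ∀ ε : ℝ, 0 < ε → ε ≤ 1 → ∀ u : ℝ × ℝ → ℝ, ContDiff ℝ 1 u →
      ((∫ p in Ioo (0:ℝ) 1 ×ˢ Ioo (0:ℝ) l, (u p)^2)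
          + (∫ p in Ioo (0:ℝ) 1 ×ˢ Ioo (0:ℝ) l, ‖fderiv ℝ u p‖^2) ≤ 1) →
      (ε⁻¹ * ∫ p in Ioo (0:ℝ) ε ×ˢ Ioo (0:ℝ) l, (u p)^2 ≤ c₁ * ε ^ (m - 1)) →
      (∫ s in Ioc (0:ℝ) l, (u (0, s))^2) ≤ c₂ * (ε ^ (m - 1) + Real.sqrt ε) :=
  trace_smallness_estimate_general l m c₁ hc₁
end
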